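/- arXiv:2511.00312 — 2 statements merged into one kernel-verified Lean document; each statement's English description precedes it below -/
import Mathlib

section
/- Let T, N be real inner product spaces, α : T × T → N symmetric bilinear, and suppose an orthogonal involution s acts on N with α taking values in the +1-eigenspace N⁺ of s. Suppose further an orthogonal map j with j² = s acts on N⁺, splitting N⁺ = N⁺⁺ ⊕ N⁺⁻ into the (+1)- and (-1)-eigenspaces of j, and that jα(v,w) = α(Jv,Jw) for a complex structure J on T. Then the (1,1)-part of α equals the orthogonal projection of α onto N⁺⁺, and α^{(2,0)} + α^{(0,2)} equals the projection of α onto N⁺⁻. -/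
/- STATEMENT 3 (Lemma on α^{(1,1)}): `T`, `N` real inner product spaces, `α` symmetric
bilinear with values in the (+1)-eigenspace `N⁺` of an orthogonal involution `s` on `N`
(hypothesis `hs`), an orthogonal `j` with `j² = s` and `j α(v,w) = α(Jv,Jw)` for a complex
structure `J` on `T`. The projections onto the (±1)-eigenspaces `N⁺⁺`, `N⁺⁻` of `j` on `N⁺`
are `n ↦ ½(n + j n)` and `n ↦ ½(n - j n)`. Complexifying as pairs ((a,b) = a + ib,
`αc (a,b) (c,d) = (α a c - α b d, α a d + α b c)`, `v_{(1,0)} = ½(v,-Jv)`,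
`v_{(0,1)} = ½(v,Jv)`), the (1,1)-part of `α` equals the projection of `α` onto `N⁺⁺`,
and `α^{(2,0)} + α^{(0,2)}` equals the projection onto `N⁺⁻`. -/

open scoped RealInnerProductSpace

theorem stmt3 {T N : Type*} [NormedAddCommGroup T] [InnerProductSpace ℝ T]
    [NormedAddCommGroup N] [InnerProductSpace ℝ N]
    (α : T →ₗ[ℝ] T →ₗ[ℝ] N) (hsym : ∀ v w : T, α v w = α w v)
    (J : T →ₗ[ℝ] T) (hJ2 : ∀ v : T, J (J v) = -v)
    (s j : N →ₗ[ℝ] N)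
    (hsO : ∀ a b : N, ⟪s a, s b⟫ = ⟪a, b⟫) (hjO : ∀ a b : N, ⟪j a, j b⟫ = ⟪a, b⟫)
    (hs2 : ∀ n : N, s (s n) = n) (hj2 : ∀ n : N, j (j n) = s n)
    (hs : ∀ v w : T, s (α v w) = α v w)          -- α takes values in N⁺
    (hjα : ∀ v w : T, j (α v w) = α (J v) (J w))
    (αc : T × T → T × T → N × N)
    (hαc : ∀ a b c d : T, αc (a, b) (c, d) = (α a c - α b d, α a d + α b c)) :
    ∀ v w : T,
      -- α^{(1,1)}(v,w) = π^{++}(α(v,w))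
      αc ((1/2 : ℝ) • ((v, -J v) : T × T)) ((1/2 : ℝ) • ((w, J w) : T × T))
        + αc ((1/2 : ℝ) • ((v, J v) : T × T)) ((1/2 : ℝ) • ((w, -J w) : T × T))
        = ((1/2 : ℝ) • (α v w + j (α v w)), (0 : N)) ∧
      -- (α^{(2,0)} + α^{(0,2)})(v,w) = π^{+-}(α(v,w))
      αc ((1/2 : ℝ) • ((v, -J v) : T × T)) ((1/2 : ℝ) • ((w, -J w) : T × T))
        + αc ((1/2 : ℝ) • ((v, J v) : T × T)) ((1/2 : ℝ) • ((w, J w) : T × T))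
        = ((1/2 : ℝ) • (α v w - j (α v w)), (0 : N)) := by
  intro v w
  have hJα : ∀ a b : T, α (J a) (J b) = j (α a b) := fun a b => (hjα a b).symm
  have hsymJ : α w (J v) = α (J v) w := hsym w (J v)
  constructor <;>
  · simp only [Prod.smul_mk, hαc, smul_neg, Prod.mk_add_mk, Prod.mk.injEq,
      map_smul, map_neg, LinearMap.smul_apply, LinearMap.neg_apply, LinearMap.add_apply]
    constructor
    · have h1 : α (J v) (J w) = j (α v w) := hjα v w ▸ rfl
      rw [show α (J v) (J w) = j (α v w) from (hjα v w).symm]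
      module
    · module
end

section
/- For the standard embedding (k = 1) of ℂP^n, the second fundamental form and its (1,1)-part coincide: α(v,v) = α^{(1,1)}(v,v) = 2(v v̄ - x x̄), where x is the base point functional and v a unit tangent direction; consequently α^{(2,0)} = α^{(0,2)} = 0, i.e. the standard embedding is (2,0)-geodesic. -/
open MvPolynomial

noncomputable def del : Derivation ℂ (MvPolynomial (Fin 4) ℂ) (MvPolynomial (Fin 4) ℂ) :=
  MvPolynomial.mkDerivation ℂ
    (fun i : Fin 4 => if i = 0 then X 2 else if i = 1 then X 3
      else if i = 2 then -X 0 else -X 1)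

noncomputable def tau : MvPolynomial (Fin 4) ℂ →ₐ[ℂ] MvPolynomial (Fin 4) ℂ :=
  MvPolynomial.aeval
    (fun i : Fin 4 => if i = 0 then X 0 else if i = 1 then X 1
      else if i = 2 then Complex.I • X 2 else -(Complex.I • X 3))

lemma key : del (del ((X 0 * X 1 : MvPolynomial (Fin 4) ℂ) ^ 1)) =
    2 * (X 2 * X 3 - X 0 * X 1) := by
  simp [del, Derivation.leibniz, mkDerivation_X, smul_eq_mul]
  ring

theorem stmt17 :
    del (del ((X 0 * X 1 : MvPolynomial (Fin 4) ℂ) ^ 1)) =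
      2 * (X 2 * X 3 - X 0 * X 1) ∧
    tau (del (del ((X 0 * X 1 : MvPolynomial (Fin 4) ℂ) ^ 1))) =
      del (del ((X 0 * X 1 : MvPolynomial (Fin 4) ℂ) ^ 1)) ∧
    (1 / 2 : ℂ) • (del (del ((X 0 * X 1 : MvPolynomial (Fin 4) ℂ) ^ 1))
        - tau (del (del ((X 0 * X 1 : MvPolynomial (Fin 4) ℂ) ^ 1)))) = 0 := by
  have h2 : tau (2 * (X 2 * X 3 - X 0 * X 1) : MvPolynomial (Fin 4) ℂ) =
      2 * (X 2 * X 3 - X 0 * X 1) := by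
    simp only [tau, map_mul, map_sub, map_ofNat, aeval_X, smul_eq_mul,
      if_pos, if_neg, Fin.isValue, reduceIte]
    have h30 : ((3:Fin 4) = 0) = False := by decide
    have h31 : ((3:Fin 4) = 1) = False := by decide
    have h32 : ((3:Fin 4) = 2) = False := by decide
    have h20 : ((2:Fin 4) = 0) = False := by decide
    have h21 : ((2:Fin 4) = 1) = False := by decide
    have h10 : ((1:Fin 4) = 0) = False := by decide
    simp [h30, h31, h32, h20, h21, h10, smul_smul, Complex.I_mul_I]
  refine ⟨key, ?_, ?_⟩ <;> rw [key, h2]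
  simp
end
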